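/- arXiv:2008.08120 — 7 statements merged into one kernel-verified Lean document; each statement's English description precedes it below -/
import Mathlib

section
/- Let L be a loop and r ∈ L. Define p ∘_r q = (p·(q·r))/r. Then (L, ∘_r) is a loop with the same identity 1, with right quotient p/_r q = (p·r)/(q·r) and left quotient p\_r q = (p\(q·r))/r. -/
/-- A loop: a quasigroup with a two-sided identity element.
`rdiv p q` is the right quotient p / q and `ldiv p q` is the left quotient p \\ q. -/
structure LoopStr (L : Type*) where
  mul : L → L → L
  rdiv : L → L → L
  ldiv : L → L → L
  one : L
  rdiv_mul : ∀ p q, mul (rdiv p q) q = p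
  mul_ldiv : ∀ p q, mul q (ldiv q p) = p
  mul_rdiv : ∀ p q, rdiv (mul p q) q = p
  ldiv_mul : ∀ p q, ldiv p (mul p q) = q
  one_mul : ∀ q, mul one q = q
  mul_one : ∀ q, mul q one = q

/-- The principal isotope `p ∘_r q = R_r⁻¹ (p · R_r q)`, where `R_r x = x · r` has inverse `· / r`;
every loop axiom reduces to cancelling `R_r`. -/
def LoopStr.rightIsotope {L : Type*} (Q : LoopStr L) (r : L) : LoopStr L where
  mul p q := Q.rdiv (Q.mul p (Q.mul q r)) r
  rdiv p q := Q.rdiv (Q.mul p r) (Q.mul q r)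
  ldiv p q := Q.rdiv (Q.ldiv p (Q.mul q r)) r
  one := Q.one
  rdiv_mul p q := by simp only [Q.rdiv_mul, Q.mul_rdiv]
  mul_ldiv p q := by simp only [Q.rdiv_mul, Q.mul_ldiv, Q.mul_rdiv]
  mul_rdiv p q := by simp only [Q.rdiv_mul, Q.mul_rdiv]
  ldiv_mul p q := by simp only [Q.rdiv_mul, Q.ldiv_mul, Q.mul_rdiv]
  one_mul q := by simp only [Q.one_mul, Q.mul_rdiv]
  mul_one q := by simp only [Q.one_mul, Q.mul_rdiv]

/-- The modified product p ∘_r q = (p·(q·r))/r makes L a loop with the same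
identity, with right quotient p/_r q = (p·r)/(q·r) and left quotient
p\\_r q = (p\\(q·r))/r. -/
theorem stmt9 {L : Type*} (Q : LoopStr L) (r : L) :
    ∃ Qr : LoopStr L,
      (∀ p q, Qr.mul p q = Q.rdiv (Q.mul p (Q.mul q r)) r) ∧
      (∀ p q, Qr.rdiv p q = Q.rdiv (Q.mul p r) (Q.mul q r)) ∧
      (∀ p q, Qr.ldiv p q = Q.rdiv (Q.ldiv p (Q.mul q r)) r) ∧
      Qr.one = Q.one :=
  ⟨Q.rightIsotope r, fun _ _ => rfl, fun _ _ => rfl, fun _ _ => rfl, rfl⟩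
end

section
/- Let L be a loop, (β,B) a right pseudoautomorphism pair with full action h(q) = β(q)·B, and r ∈ L. Then for all p,q ∈ L: β(p ∘_r q) = β(p) ∘_{h(r)} β(q), and moreover β is a right pseudoautomorphism of (L,∘_r) with companion h(r)/r, i.e. β(p ∘_r q) ∘_r (h(r)/r) = β(p) ∘_r (β(q) ∘_r (h(r)/r)). -/
namespace LoopStr

variable {L : Type*} (Q : LoopStr L)

/-- `isotopeMul r p q` is `p ∘_r q`. -/
def isotopeMul (r p q : L) : L := Q.rdiv (Q.mul p (Q.mul q r)) r

theorem isotopeMul_isotopeMul_rdiv (r s x y : L) :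
    Q.isotopeMul r (Q.isotopeMul s x y) (Q.rdiv s r) =
      Q.isotopeMul r x (Q.isotopeMul r y (Q.rdiv s r)) := by
  -- `z ∘_r (s/r) = (z·s)/r`, so both sides reduce to `(x·(y·s))/r`
  simp only [isotopeMul, rdiv_mul]

variable {Q}

theorem mul_mul_pseudoaut {β : L → L} {B : L}
    (hps : ∀ p q, Q.mul (β p) (Q.mul (β q) B) = Q.mul (β (Q.mul p q)) B) (p q r : L) :
    Q.mul (β p) (Q.mul (β q) (Q.mul (β r) B)) = Q.mul (β (Q.mul p (Q.mul q r))) B := by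
  rw [hps q r, hps p]

theorem map_isotopeMul {β : L → L} {B : L}
    (hps : ∀ p q, Q.mul (β p) (Q.mul (β q) B) = Q.mul (β (Q.mul p q)) B) (r p q : L) :
    β (Q.isotopeMul r p q) = Q.isotopeMul (Q.mul (β r) B) (β p) (β q) := by
  -- multiply both sides on the right by `h r = β r · B` and apply `hps` to `(p ∘_r q) · r = p·(q·r)`
  have key : Q.mul (β (Q.isotopeMul r p q)) (Q.mul (β r) B) =
      Q.mul (β p) (Q.mul (β q) (Q.mul (β r) B)) := by
    rw [hps, isotopeMul, rdiv_mul, mul_mul_pseudoaut hps]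
  rw [← Q.mul_rdiv (β (Q.isotopeMul r p q)) (Q.mul (β r) B), key]
  rfl

end LoopStr

theorem stmt13_general {L : Type*} (Q : LoopStr L) (β : L → L) (B : L)
    (hps : ∀ p q, Q.mul (β p) (Q.mul (β q) B) = Q.mul (β (Q.mul p q)) B) (r : L) :
    -- notation: mulS s p q = p ∘_s q, h q = β(q)·B, C = h(r)/r
    let mulS : L → L → L → L := fun s p q => Q.rdiv (Q.mul p (Q.mul q s)) s
    let h : L → L := fun q => Q.mul (β q) B
    let C : L := Q.rdiv (h r) r
    (∀ p q, β (mulS r p q) = mulS (h r) (β p) (β q)) ∧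
      (∀ p q, mulS r (β (mulS r p q)) C = mulS r (β p) (mulS r (β q) C)) := by
  intro mulS h C
  have hmap : ∀ p q, β (mulS r p q) = mulS (h r) (β p) (β q) := LoopStr.map_isotopeMul hps r
  refine ⟨hmap, fun p q => ?_⟩
  rw [hmap]
  exact Q.isotopeMul_isotopeMul_rdiv r (h r) (β p) (β q)

/-- If (β,B) is a right pseudoautomorphism pair with full action h(q)=β(q)·B,
then β(p ∘_r q) = β(p) ∘_{h(r)} β(q), and β is a right pseudoautomorphism of
(L,∘_r) with companion h(r)/r. -/
theorem stmt13 {L : Type*} (Q : LoopStr L) (β : L → L) (B : L)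
    (hbij : Function.Bijective β)
    (hps : ∀ p q, Q.mul (β p) (Q.mul (β q) B) = Q.mul (β (Q.mul p q)) B) (r : L) :
    -- notation: mulS s p q = p ∘_s q, h q = β(q)·B, C = h(r)/r
    let mulS : L → L → L → L := fun s p q => Q.rdiv (Q.mul p (Q.mul q s)) s
    let h : L → L := fun q => Q.mul (β q) B
    let C : L := Q.rdiv (h r) r
    (∀ p q, β (mulS r p q) = mulS (h r) (β p) (β q)) ∧
      (∀ p q, mulS r (β (mulS r p q)) C = mulS r (β p) (mulS r (β q) C)) :=
  stmt13_general Q β B hps r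
end

section
/- Let L be a loop, (β,B) a right pseudoautomorphism pair with full action h(q) = β(q)·B, and r ∈ L. Then for all p,q ∈ L: β(p /_r q) = β(p) /_{h(r)} β(q), where /_s denotes the right quotient of (L,∘_s). -/
theorem LoopStr.eq_rdiv_of_mul_eq {L : Type*} (Q : LoopStr L) {x y z : L}
    (h : Q.mul x y = z) : x = Q.rdiv z y := by
  rw [← h, Q.mul_rdiv]

theorem stmt14_general {L : Type*} (Q : LoopStr L) (β : L → L) (B : L)
    (hps : ∀ p q, Q.mul (β p) (Q.mul (β q) B) = Q.mul (β (Q.mul p q)) B) (r : L) :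
    ∀ p q,
      β (Q.rdiv (Q.mul p r) (Q.mul q r)) =
        Q.rdiv (Q.mul (β p) (Q.mul (β r) B)) (Q.mul (β q) (Q.mul (β r) B)) := by
  intro p q
  apply Q.eq_rdiv_of_mul_eq
  -- `hps` says β(a)·h(b) = h(ab), so both sides equal h(pr) via h(qr) = β(q)·h(r)
  rw [hps q r, hps _ (Q.mul q r), Q.rdiv_mul, hps p r]

/-- If (β,B) is a right pseudoautomorphism pair with full action h(q)=β(q)·B,
then β(p /_r q) = β(p) /_{h(r)} β(q). -/
theorem stmt14 {L : Type*} (Q : LoopStr L) (β : L → L) (B : L)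
    (hbij : Function.Bijective β)
    (hps : ∀ p q, Q.mul (β p) (Q.mul (β q) B) = Q.mul (β (Q.mul p q)) B) (r : L) :
    ∀ p q,
      β (Q.rdiv (Q.mul p r) (Q.mul q r)) =
        Q.rdiv (Q.mul (β p) (Q.mul (β r) B)) (Q.mul (β q) (Q.mul (β r) B)) :=
  stmt14_general Q β B hps r
end

section
/- Let L be a loop, (α,A) a right pseudoautomorphism pair with full action h(q) = α(q)·A, and r ∈ L. Then for any B ∈ L: h(B)/r = β_r(B/r), where β_r is the map p ↦ α(p) ∘_r (h(r)/r). Equivalently, h(B)/r = α(B/r) ∘_r (h(r)/r). -/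
theorem stmt15_general {L : Type*} (Q : LoopStr L) (α : L → L) (A : L)
    (hps : ∀ p q, Q.mul (α p) (Q.mul (α q) A) = Q.mul (α (Q.mul p q)) A) (r : L) :
    ∀ B,
      Q.rdiv (Q.mul (α B) A) r =
        Q.rdiv (Q.mul (α (Q.rdiv B r))
          (Q.mul (Q.rdiv (Q.mul (α r) A) r) r)) r := by
  intro B
  rw [Q.rdiv_mul, hps, Q.rdiv_mul]

/-- G-set isomorphism property: for a right pseudoautomorphism pair (α,A)
with full action h(q)=α(q)·A and any r, B ∈ L:
h(B)/r = α(B/r) ∘_r (h(r)/r). -/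
theorem stmt15 {L : Type*} (Q : LoopStr L) (α : L → L) (A : L)
    (hbij : Function.Bijective α)
    (hps : ∀ p q, Q.mul (α p) (Q.mul (α q) A) = Q.mul (α (Q.mul p q)) A) (r : L) :
    ∀ B,
      Q.rdiv (Q.mul (α B) A) r =
        Q.rdiv (Q.mul (α (Q.rdiv B r))
          (Q.mul (Q.rdiv (Q.mul (α r) A) r) r)) r :=
  stmt15_general Q α A hps r
end

section
/- Let L be a loop, r ∈ L, and C ∈ L. If C = (r·A)/r for some A in the right nucleus N^R(L), then C lies in the right nucleus of (L,∘_r): (p ∘_r q) ∘_r C = p ∘_r (q ∘_r C) for all p,q ∈ L. -/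
namespace LoopStr

variable {L : Type*} (Q : LoopStr L)

/-- The principal isotope `p ∘_r q` of `Q`. -/
def circ (r p q : L) : L :=
  Q.rdiv (Q.mul p (Q.mul q r)) r

theorem circ_mul_right (r p q : L) : Q.mul (Q.circ r p q) r = Q.mul p (Q.mul q r) :=
  Q.rdiv_mul _ _

theorem circ_rdiv_mul_of_nucleus {r A : L}
    (hA : ∀ p q, Q.mul (Q.mul p q) A = Q.mul p (Q.mul q A)) (p : L) :
    Q.circ r p (Q.rdiv (Q.mul r A) r) = Q.rdiv (Q.mul (Q.mul p r) A) r := by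
  rw [circ, Q.rdiv_mul, hA]

end LoopStr

/-- If A is in the right nucleus of L and C = (r·A)/r, then C is in the right
nucleus of (L,∘_r): (p ∘_r q) ∘_r C = p ∘_r (q ∘_r C). -/
theorem stmt16 {L : Type*} (Q : LoopStr L) (r A : L)
    (hA : ∀ p q, Q.mul (Q.mul p q) A = Q.mul p (Q.mul q A)) :
    let mulr : L → L → L := fun p q => Q.rdiv (Q.mul p (Q.mul q r)) r
    let C : L := Q.rdiv (Q.mul r A) r
    ∀ p q, mulr (mulr p q) C = mulr p (mulr q C) := by
  intro _ _ p q
  -- both sides reduce to `((p·(q·r))·A)/r`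
  change Q.circ r (Q.circ r p q) _ = Q.circ r p (Q.circ r q _)
  rw [Q.circ_rdiv_mul_of_nucleus hA, Q.circ_rdiv_mul_of_nucleus hA, Q.circ_mul_right,
    LoopStr.circ, Q.rdiv_mul, hA]
end

section
/- Let L be a Moufang loop. Then for every q ∈ L, the map Ad_q: p ↦ q·p·q^{-1} is a right pseudoautomorphism of L with companion q³, i.e. (q·(xy)·q^{-1})·q³ = (q·x·q^{-1})·((q·y·q^{-1})·q³) for all x,y ∈ L. -/
/-!
Write `qᵖ = q \ 1`. The right Bol identity alone gives the right inverse property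
`(p·q)·qᵖ = p`, and with the left Bol identity also `qᵖ·(q·r) = r` and flexibility
`q·(r·q) = (q·r)·q`. Hence the middle Moufang identity `(q·a)·(b·q) = (q·(a·b))·q` holds,
and right Bol applied to `(a·qᵖ)·q·q` gives `(a·qᵖ)·q³ = (a·q)·q`. Both sides of the claim
thereby become `((q·x)·(y·q))·q`.
-/

namespace LoopStr

variable {L : Type*} (Q : LoopStr L)

def IsLeftBol : Prop :=
  ∀ p q r, Q.mul p (Q.mul q (Q.mul p r)) = Q.mul (Q.mul p (Q.mul q p)) r

def IsRightBol : Prop :=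
  ∀ p q r, Q.mul (Q.mul (Q.mul p q) r) q = Q.mul p (Q.mul (Q.mul q r) q)

local infixl:70 " ⋆ " => Q.mul

local notation:max q:max "ᵖ" => Q.ldiv q Q.one

variable {Q}

theorem mul_right_cancel {a b c : L} (h : a ⋆ c = b ⋆ c) : a = b := by
  simpa only [Q.mul_rdiv] using congrArg (Q.rdiv · c) h

theorem mul_left_cancel {a b c : L} (h : c ⋆ a = c ⋆ b) : a = b := by
  simpa only [Q.ldiv_mul] using congrArg (Q.ldiv c) h

theorem mul_rightInv (q : L) : q ⋆ qᵖ = Q.one :=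
  Q.mul_ldiv Q.one q

theorem mul_rightInv_cancel_right (hR : Q.IsRightBol) (p q : L) : p ⋆ q ⋆ qᵖ = p :=
  mul_right_cancel (c := q) <| by rw [hR, mul_rightInv, Q.one_mul]

theorem rightInv_mul_cancel_right (hR : Q.IsRightBol) (p q : L) : p ⋆ qᵖ ⋆ q = p :=
  mul_right_cancel (c := qᵖ) (mul_rightInv_cancel_right hR _ q)

theorem rightInv_mul (hR : Q.IsRightBol) (q : L) : qᵖ ⋆ q = Q.one := by
  simpa only [Q.one_mul] using rightInv_mul_cancel_right hR Q.one q

theorem rightInv_mul_cancel_left (hL : Q.IsLeftBol) (hR : Q.IsRightBol) (q r : L) :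
    qᵖ ⋆ (q ⋆ r) = r :=
  mul_left_cancel (c := q) <| by rw [hL, rightInv_mul hR, Q.mul_one]

theorem mul_rightInv_cancel_left (hL : Q.IsLeftBol) (hR : Q.IsRightBol) (q r : L) :
    q ⋆ (qᵖ ⋆ r) = r :=
  mul_left_cancel (c := qᵖ) (rightInv_mul_cancel_left hL hR q _)

theorem mul_flexible (hL : Q.IsLeftBol) (hR : Q.IsRightBol) (q r : L) :
    q ⋆ (r ⋆ q) = q ⋆ r ⋆ q := by
  have h := hR qᵖ q r
  rw [rightInv_mul hR, Q.one_mul] at h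
  rw [h, mul_rightInv_cancel_left hL hR]

theorem middle_moufang (hL : Q.IsLeftBol) (hR : Q.IsRightBol) (q a b : L) :
    q ⋆ a ⋆ (b ⋆ q) = q ⋆ (a ⋆ b) ⋆ q := by
  obtain ⟨c, rfl⟩ : ∃ c, q ⋆ c = b := ⟨Q.ldiv q b, Q.mul_ldiv b q⟩
  rw [← hR, ← mul_flexible hL hR, hL]

theorem mul_rightInv_mul_cube (hR : Q.IsRightBol) (a q : L) :
    a ⋆ qᵖ ⋆ (q ⋆ q ⋆ q) = a ⋆ q ⋆ q := by
  rw [← hR, rightInv_mul_cancel_right hR]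

end LoopStr

open LoopStr in
/-- In a Moufang loop (a loop satisfying the left and right Bol identities),
for every q the map Ad_q : p ↦ (q·p)·q⁻¹ is a right pseudoautomorphism with
companion q³:  ((q·(x·y))·q⁻¹)·q³ = ((q·x)·q⁻¹)·(((q·y)·q⁻¹)·q³). -/
theorem stmt17 {L : Type*} (Q : LoopStr L)
    (leftBol : ∀ p q r, Q.mul p (Q.mul q (Q.mul p r)) = Q.mul (Q.mul p (Q.mul q p)) r)
    (rightBol : ∀ p q r, Q.mul (Q.mul (Q.mul p q) r) q = Q.mul p (Q.mul (Q.mul q r) q))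
    (q : L) :
    let qinv : L := Q.ldiv q Q.one
    let qcube : L := Q.mul (Q.mul q q) q
    ∀ x y,
      Q.mul (Q.mul (Q.mul q (Q.mul x y)) qinv) qcube =
        Q.mul (Q.mul (Q.mul q x) qinv)
          (Q.mul (Q.mul (Q.mul q y) qinv) qcube) := by
  intro qinv qcube x y
  calc Q.mul (Q.mul (Q.mul q (Q.mul x y)) qinv) qcube
      = Q.mul (Q.mul (Q.mul q (Q.mul x y)) q) q := mul_rightInv_mul_cube rightBol _ q
    _ = Q.mul (Q.mul (Q.mul (Q.mul (Q.mul q x) qinv) q) (Q.mul y q)) q := by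
      rw [← middle_moufang leftBol rightBol, rightInv_mul_cancel_right rightBol]
    _ = Q.mul (Q.mul (Q.mul q x) qinv) (Q.mul (Q.mul (Q.mul q y) q) q) := by
      rw [rightBol, mul_flexible leftBol rightBol]
    _ = Q.mul (Q.mul (Q.mul q x) qinv) (Q.mul (Q.mul (Q.mul q y) qinv) qcube) := by
      rw [mul_rightInv_mul_cube rightBol]
end

section
/- Let L be a loop and h = (α,A) a right pseudoautomorphism pair with full action h(q) = α(q)·A. For any s ∈ L and C in the right nucleus N^R(L), define h''(C) = A\(h(C)). Then h(s·C) = h(s)·h''(C). -/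
/-!
Pick `z` with `h z = 1` (possible as `α` is onto); then `α (p / z) = h p` for every `p`.
Since `α p · h q = h (p q)`, for `C` in the right nucleus
`h x · h (z C) = α (x / z) · h (z C) = h ((x / z) z · C) = h (x C)`.
Taking `x = 1` (where `h 1 = A`) identifies `A \ h C` with `h (z C)`; taking `x = s` gives the claim.
-/

namespace LoopStr

variable {L : Type*} (Q : LoopStr L)

def IsRightPseudoautomorphism (α : L → L) (A : L) : Prop :=
  ∀ p q, Q.mul (α p) (Q.mul (α q) A) = Q.mul (α (Q.mul p q)) A

def IsRightNuclear (C : L) : Prop :=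
  ∀ p q, Q.mul (Q.mul p q) C = Q.mul p (Q.mul q C)

def pseudoAction (α : L → L) (A : L) (q : L) : L :=
  Q.mul (α q) A

theorem mul_left_cancel_s19 {p q r : L} (h : Q.mul p q = Q.mul p r) : q = r := by
  rw [← Q.ldiv_mul p q, h, Q.ldiv_mul]

section Pseudoautomorphism

variable {Q} {α : L → L} {A : L}

theorem mul_pseudoAction (hα : Q.IsRightPseudoautomorphism α A) (p q : L) :
    Q.mul (α p) (Q.pseudoAction α A q) = Q.pseudoAction α A (Q.mul p q) :=
  hα p q

theorem pseudoAction_one (hα : Q.IsRightPseudoautomorphism α A) :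
    Q.pseudoAction α A Q.one = A :=
  Q.mul_left_cancel_s19 (p := α Q.one) <| by
    rw [mul_pseudoAction hα, Q.one_mul]
    rfl

theorem apply_rdiv_eq_pseudoAction (hα : Q.IsRightPseudoautomorphism α A) {z : L}
    (hz : Q.pseudoAction α A z = Q.one) (p : L) :
    α (Q.rdiv p z) = Q.pseudoAction α A p := by
  rw [← Q.mul_one (α _), ← hz, mul_pseudoAction hα, Q.rdiv_mul]

theorem pseudoAction_mul_pseudoAction_of_isRightNuclear
    (hα : Q.IsRightPseudoautomorphism α A) {z C : L}
    (hz : Q.pseudoAction α A z = Q.one) (hC : Q.IsRightNuclear C) (x : L) :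
    Q.mul (Q.pseudoAction α A x) (Q.pseudoAction α A (Q.mul z C)) =
      Q.pseudoAction α A (Q.mul x C) := by
  rw [← apply_rdiv_eq_pseudoAction hα hz, mul_pseudoAction hα, ← hC, Q.rdiv_mul]

theorem ldiv_pseudoAction_of_isRightNuclear
    (hα : Q.IsRightPseudoautomorphism α A) {z C : L}
    (hz : Q.pseudoAction α A z = Q.one) (hC : Q.IsRightNuclear C) :
    Q.ldiv A (Q.pseudoAction α A C) = Q.pseudoAction α A (Q.mul z C) := by
  have h := pseudoAction_mul_pseudoAction_of_isRightNuclear hα hz hC Q.one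
  rw [pseudoAction_one hα, Q.one_mul] at h
  rw [← h, Q.ldiv_mul]

end Pseudoautomorphism

end LoopStr

/-- For a right pseudoautomorphism pair (α,A) with full action h(q)=α(q)·A,
any s ∈ L and C in the right nucleus, with h''(C) = A\\h(C):
h(s·C) = h(s)·h''(C). -/
theorem stmt19 {L : Type*} (Q : LoopStr L) (α : L → L) (A : L)
    (hbij : Function.Bijective α)
    (hps : ∀ p q, Q.mul (α p) (Q.mul (α q) A) = Q.mul (α (Q.mul p q)) A)
    (s C : L)
    (hC : ∀ p q, Q.mul (Q.mul p q) C = Q.mul p (Q.mul q C)) :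
    let h : L → L := fun q => Q.mul (α q) A
    h (Q.mul s C) = Q.mul (h s) (Q.ldiv A (h C)) := by
  obtain ⟨z, hz⟩ := hbij.2 (Q.rdiv Q.one A)
  have hz : Q.pseudoAction α A z = Q.one := by
    rw [LoopStr.pseudoAction, hz, Q.rdiv_mul]
  show Q.pseudoAction α A (Q.mul s C) =
    Q.mul (Q.pseudoAction α A s) (Q.ldiv A (Q.pseudoAction α A C))
  rw [LoopStr.ldiv_pseudoAction_of_isRightNuclear hps hz hC,
    LoopStr.pseudoAction_mul_pseudoAction_of_isRightNuclear hps hz hC]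
end
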